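/- Let D be a positive squarefree integer with 3 | D, and let A, B be integers with A ≡ −D (mod 9) and B ≡ 0 (mod 9). Then: (1) there exists a nonzero t ∈ ℚ_3⁵ with Q1(t) = Q2(t) = 0, i.e., S^(D;A,B)(ℚ_3) ≠ ∅; and (2) for every nonzero t ∈ ℚ_3⁵ with Q1(t) = Q2(t) = 0 and all u ∈ {t0, t1}, v ∈ {t0 + A·t1, t0 + B·t1} with u·v ≠ 0, there exist x, y ∈ ℚ_3 with u·v = x² − D·y² (i.e., the Brauer class α evaluates constantly to 0 on S^(D;A,B)(ℚ_3)). -/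

import Mathlib

/-!
(1) Since `3 ∣ A` and `3 ∣ B`, Hensel's lemma gives `y ∈ ℤ₃` with `(y² + A)(y² + B) = y²`, and
`(y², 1, y, 0, 0)` lies on the surface.

(2) Norms from `ℚ₃(√D)` are closed under products and under division by squares. The equations
say that `t₀t₁` and `(t₀ + At₁)(t₀ + Bt₁)` are norms, and `A = -D s²` is one because
`-A/D ≡ 1 (mod 3)`; so every `u·v` is a norm once `t₀(t₀ + At₁)` is (the vanishing of `t₀ + At₁`
forces `t₁ = 0`, as neither `D` nor `-1` is a square). Scale `t` to a primitive point of `ℤ₃⁵`.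
If `t₀` is a unit, `t₀(t₀ + At₁)` is `t₀²` times a unit `≡ 1 (mod 3)`, hence a square. Otherwise
the equations force `3 ∣ t₂, t₄`, then `3 ∣ t₃`, so `t₁` is a unit and `9 ∣ t₀`; then
`t₀ + At₁ = At₁z²` and `t₀(t₀ + At₁) = (t₀t₁)·A·z²` is a norm.
-/

open Polynomial PadicInt

def IsQuadNorm {R : Type*} [CommRing R] (d q : R) : Prop :=
  ∃ x y : R, q = x ^ 2 - d * y ^ 2

namespace IsQuadNorm

variable {R S F : Type*} [CommRing R] [CommRing S] [Field F] {d q r : R}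

theorem zero : IsQuadNorm d 0 := ⟨0, 0, by ring⟩

theorem of_isSquare (hq : IsSquare q) : IsQuadNorm d q := by
  obtain ⟨x, rfl⟩ := hq
  exact ⟨x, 0, by ring⟩

theorem mul (hq : IsQuadNorm d q) (hr : IsQuadNorm d r) : IsQuadNorm d (q * r) := by
  obtain ⟨x, y, rfl⟩ := hq
  obtain ⟨z, w, rfl⟩ := hr
  exact ⟨x * z + d * y * w, x * w + y * z, by ring⟩

theorem mul_sq (hq : IsQuadNorm d q) (s : R) : IsQuadNorm d (q * s ^ 2) := by
  obtain ⟨x, y, rfl⟩ := hq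
  exact ⟨x * s, y * s, by ring⟩

theorem map (f : R →+* S) (hq : IsQuadNorm d q) : IsQuadNorm (f d) (f q) := by
  obtain ⟨x, y, rfl⟩ := hq
  exact ⟨f x, f y, by simp⟩

theorem mul_of_mul_of_mul {d a b c : F} (hb : b ≠ 0) (hab : IsQuadNorm d (a * b))
    (hbc : IsQuadNorm d (b * c)) : IsQuadNorm d (a * c) := by
  convert (hab.mul hbc).mul_sq b⁻¹ using 1
  field_simp

end IsQuadNorm

theorem eq_zero_of_sq_eq_mul_sq {F : Type*} [Field F] {d x y : F} (hd : ¬IsSquare d)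
    (h : x ^ 2 = d * y ^ 2) : x = 0 ∧ y = 0 := by
  obtain rfl : y = 0 := by
    by_contra hy
    exact hd ⟨x / y, by field_simp; linear_combination -h⟩
  exact ⟨pow_eq_zero_iff two_ne_zero |>.1 (by simpa using h), rfl⟩

section Field

variable {F : Type*} [Field F] {D A B t₀ t₁ t₂ t₃ t₄ : F}

theorem eq_zero_of_add_mul_eq_zero (hD : ¬IsSquare D) (hneg : ¬IsSquare (-1 : F)) {s : F}
    (hs : s ≠ 0) (hA : A = -(D * s ^ 2)) (h₁ : t₂ ^ 2 - D * t₃ ^ 2 - t₀ * t₁ = 0)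
    (h₂ : t₂ ^ 2 - D * t₄ ^ 2 - (t₀ + A * t₁) * (t₀ + B * t₁) = 0) (hv : t₀ + A * t₁ = 0) :
    t₁ = 0 := by
  obtain ⟨rfl, -⟩ := eq_zero_of_sq_eq_mul_sq hD (x := t₂) (y := t₄)
    (by linear_combination h₂ + (t₀ + B * t₁) * hv)
  have hD0 : D ≠ 0 := by rintro rfl; exact hD ⟨0, by simp⟩
  have h : D * (t₃ ^ 2 - -1 * (s * t₁) ^ 2) = 0 := by
    linear_combination -h₁ - t₁ * hv + t₁ ^ 2 * hA
  obtain ⟨-, h'⟩ := eq_zero_of_sq_eq_mul_sq hneg (sub_eq_zero.1 ((mul_eq_zero.1 h).resolve_left hD0))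
  exact (mul_eq_zero.1 h').resolve_left hs

theorem isQuadNorm_mul_of_isQuadNorm_mul_add (hA : IsQuadNorm D A)
    (hvA : t₀ + A * t₁ = 0 → t₁ = 0) (hkey : IsQuadNorm D (t₀ * (t₀ + A * t₁)))
    (h₁ : t₂ ^ 2 - D * t₃ ^ 2 - t₀ * t₁ = 0)
    (h₂ : t₂ ^ 2 - D * t₄ ^ 2 - (t₀ + A * t₁) * (t₀ + B * t₁) = 0) {u v : F}
    (hu : u = t₀ ∨ u = t₁) (hv : v = t₀ + A * t₁ ∨ v = t₀ + B * t₁) (hu₀ : u ≠ 0) :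
    IsQuadNorm D (u * v) := by
  have h₁₀ : IsQuadNorm D (t₁ * t₀) := ⟨t₂, t₃, by linear_combination -h₁⟩
  have hAB : IsQuadNorm D ((t₀ + A * t₁) * (t₀ + B * t₁)) := ⟨t₂, t₄, by linear_combination -h₂⟩
  have h₁A : IsQuadNorm D (t₁ * (t₀ + A * t₁)) := by
    by_cases h₀ : t₀ = 0
    · subst h₀
      convert hA.mul_sq t₁ using 1
      ring
    · exact .mul_of_mul_of_mul h₀ h₁₀ hkey
  have hA₀ : t₀ + A * t₁ ≠ 0 := by
    intro h
    have ht₁ := hvA h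
    rcases hu with rfl | rfl
    · exact hu₀ (by simpa [ht₁] using h)
    · exact hu₀ ht₁
  rcases hu with rfl | rfl <;> rcases hv with rfl | rfl
  · exact hkey
  · exact .mul_of_mul_of_mul hA₀ hkey hAB
  · exact h₁A
  · exact .mul_of_mul_of_mul hA₀ h₁A hAB

end Field

namespace PadicInt

variable {p : ℕ} [Fact p.Prime]

@[simp, norm_cast]
theorem coe_ofNat (n : ℕ) [n.AtLeastTwo] : ((ofNat(n) : ℤ_[p]) : ℚ_[p]) = ofNat(n) :=
  rfl

theorem dvd_iff_not_isUnit {x : ℤ_[p]} : (p : ℤ_[p]) ∣ x ↔ ¬IsUnit x := by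
  rw [not_isUnit_iff, norm_lt_one_iff_dvd]

theorem isUnit_of_dvd_sub {a b : ℤ_[p]} (hb : IsUnit b) (h : (p : ℤ_[p]) ∣ a - b) :
    IsUnit a := by
  by_contra ha
  exact dvd_iff_not_isUnit.1 (by simpa using dvd_sub (dvd_iff_not_isUnit.2 ha) h) hb

theorem toZMod_eq_zero_iff {x : ℤ_[p]} : toZMod x = 0 ↔ (p : ℤ_[p]) ∣ x := by
  rw [← RingHom.mem_ker, ker_toZMod, maximalIdeal_eq_span_p, Ideal.mem_span_singleton]

theorem isUnit_two (hp : p ≠ 2) : IsUnit (2 : ℤ_[p]) := by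
  rw [isUnit_iff]
  exact_mod_cast norm_natCast_eq_one_iff.2 ((Nat.coprime_primes Fact.out Nat.prime_two).2 hp)

theorem exists_root_of_dvd_eval {F : ℤ_[p][X]} {a : ℤ_[p]} (h : (p : ℤ_[p]) ∣ F.eval a)
    (h' : IsUnit (F.derivative.eval a)) : ∃ z, F.eval z = 0 ∧ (p : ℤ_[p]) ∣ z - a := by
  have hu : ‖F.derivative.aeval a‖ = 1 := by simpa [isUnit_iff] using h'
  obtain ⟨z, hz, hza, -⟩ := hensels_lemma (F := F) (a := a)
    (by rw [hu, one_pow, ← coe_aeval_eq_eval] at *; exact (norm_lt_one_iff_dvd _).2 h)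
  exact ⟨z, by simpa using hz, (norm_lt_one_iff_dvd _).1 (hu ▸ hza)⟩

theorem isSquare_one_add_mul (hp : p ≠ 2) (x : ℤ_[p]) : IsSquare (1 + p * x) := by
  obtain ⟨z, hz, -⟩ := exists_root_of_dvd_eval (F := X ^ 2 - C (1 + p * x)) (a := 1)
    ⟨-x, by simp⟩ (by simpa [one_add_one_eq_two] using isUnit_two hp)
  exact ⟨z, by simp at hz; linear_combination -hz⟩

theorem isSquare_mul_add_mul (hp : p ≠ 2) {t : ℤ_[p]} (ht : IsUnit t) (x : ℤ_[p]) :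
    IsSquare (t * (t + p * x)) := by
  obtain ⟨z, hz⟩ := isSquare_one_add_mul hp (x * ↑ht.unit⁻¹)
  exact ⟨t * z, by linear_combination t ^ 2 * hz - (t * p * x) * ht.mul_val_inv⟩

theorem exists_sq_mul_eq (hp : p ≠ 2) {a b : ℤ_[p]} (ha : (p : ℤ_[p]) ∣ a)
    (hb : (p : ℤ_[p]) ∣ b) : ∃ y, (y ^ 2 + a) * (y ^ 2 + b) = y ^ 2 := by
  have hab : IsUnit (1 + a + b) :=
    isUnit_of_dvd_sub isUnit_one (by rw [add_assoc, add_sub_cancel_left]; exact dvd_add ha hb)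
  have hF : (p : ℤ_[p]) ∣ a + (b + a * b) := dvd_add ha (dvd_add hb (dvd_mul_of_dvd_left ha b))
  obtain ⟨y, hy, -⟩ := exists_root_of_dvd_eval (F := (X ^ 2 + C a) * (X ^ 2 + C b) - X ^ 2)
    (a := 1) (by simpa [add_mul, mul_add, add_assoc] using hF)
    (by convert (isUnit_two hp).mul hab using 1; simp [derivative_mul]; ring)
  exact ⟨y, by simpa [sub_eq_zero] using hy⟩

theorem not_isSquare_coe {y : ℤ_[p]} (h : ¬IsSquare y) : ¬IsSquare (y : ℚ_[p]) := by
  rintro ⟨x, hx⟩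
  have hx1 : ‖x‖ ≤ 1 := by
    have : ‖x‖ * ‖x‖ ≤ 1 := by rw [← norm_mul, ← hx]; exact y.2
    nlinarith [norm_nonneg x]
  exact h ⟨⟨x, hx1⟩, ext hx⟩

end PadicInt

theorem Padic.exists_point {p : ℕ} [Fact p.Prime] (hp : p ≠ 2) (D : ℚ_[p]) {a b : ℤ_[p]}
    (ha : (p : ℤ_[p]) ∣ a) (hb : (p : ℤ_[p]) ∣ b) :
    ∃ t : Fin 5 → ℚ_[p], t ≠ 0 ∧ t 2 ^ 2 - D * t 3 ^ 2 - t 0 * t 1 = 0 ∧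
      t 2 ^ 2 - D * t 4 ^ 2 - (t 0 + a * t 1) * (t 0 + b * t 1) = 0 := by
  obtain ⟨y, hy⟩ := exists_sq_mul_eq hp ha hb
  refine ⟨![(y : ℚ_[p]) ^ 2, 1, y, 0, 0], fun h => by simpa using congrFun h 1, by simp, ?_⟩
  have hyK := congrArg ((↑) : ℤ_[p] → ℚ_[p]) hy
  push_cast at hyK
  simp
  linear_combination -hyK

theorem Padic.exists_primitive_mul {p n : ℕ} [Fact p.Prime] (t : Fin n → ℚ_[p]) (ht : t ≠ 0) :
    ∃ c : ℚ_[p], c ≠ 0 ∧ ∃ s : Fin n → ℤ_[p], (∃ j, s j = 1) ∧ ∀ i, (s i : ℚ_[p]) = c * t i := by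
  obtain ⟨i, -⟩ := Function.ne_iff.1 ht
  have : Nonempty (Fin n) := ⟨i⟩
  obtain ⟨j, hj⟩ := Finite.exists_max fun i => ‖t i‖
  have htj : t j ≠ 0 := fun h => ht (funext fun i => by simpa [h] using hj i)
  refine ⟨(t j)⁻¹, inv_ne_zero htj, fun i => ⟨(t j)⁻¹ * t i, ?_⟩, ⟨j, ?_⟩, fun i => rfl⟩
  · rw [norm_mul, norm_inv, inv_mul_le_one₀ (norm_pos_iff.2 htj)]
    exact hj i
  · exact PadicInt.ext (inv_mul_cancel₀ htj)

namespace ThreeAdic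

variable {m a b : ℤ_[3]}

theorem exists_eq_neg_mul_sq (hm : IsUnit m) (ha : (3 : ℤ_[3]) ∣ a + m) :
    ∃ s, a = -(m * s ^ 2) := by
  obtain ⟨k, hk⟩ := ha
  obtain ⟨s, hs⟩ := isSquare_one_add_mul (p := 3) (by norm_num) (-(k * ↑hm.unit⁻¹))
  exact ⟨s, by push_cast at hs; linear_combination hk - m * hs - 3 * k * hm.mul_val_inv⟩

theorem not_isSquare_three_mul (hm : IsUnit m) : ¬IsSquare (3 * m) := by
  rintro ⟨x, hx⟩
  obtain ⟨y, rfl⟩ : (3 : ℤ_[3]) ∣ x :=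
    prime_p.dvd_of_dvd_pow (n := 2) ⟨m, by linear_combination -hx⟩
  refine dvd_iff_not_isUnit.1 ⟨y * y, mul_left_cancel₀ (by norm_num : (3 : ℤ_[3]) ≠ 0) ?_⟩ hm
  linear_combination hx

theorem not_isSquare_neg_one : ¬IsSquare (-1 : ℤ_[3]) := fun h =>
  absurd (by simpa using h.map (toZMod (p := 3))) (by decide : ¬IsSquare (-1 : ZMod 3))

-- If `3 ∤ t₃`, the first equation gives `τ t₁ ≡ -m` and the second `α² ≡ τ² + m² ≡ 2 (mod 3)`.
theorem three_dvd_of_reduced (hm : IsUnit m) (ha : (3 : ℤ_[3]) ∣ a + m) {τ α ε t₁ t₃ : ℤ_[3]}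
    (E₁ : 3 * α ^ 2 - m * t₃ ^ 2 - τ * t₁ = 0)
    (E₂ : α ^ 2 - 3 * m * ε ^ 2 - (τ + a * t₁) * (τ + 3 * b * t₁) = 0) : (3 : ℤ_[3]) ∣ t₃ := by
  have mod3 : ∀ m τ t₁ t₃ α : ZMod 3, m ≠ 0 → m * t₃ ^ 2 + τ * t₁ = 0 →
      α ^ 2 = (τ - m * t₁) * τ → t₃ = 0 := by decide
  have h30 : toZMod (3 : ℤ_[3]) = 0 := by rw [map_ofNat]; decide
  have ha' : toZMod a = -toZMod m := by
    have h := toZMod_eq_zero_iff.2 ha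
    rw [map_add] at h
    linear_combination h
  have hE₁ := congrArg toZMod E₁
  have hE₂ := congrArg toZMod E₂
  simp only [map_add, map_sub, map_mul, map_pow, map_zero] at hE₁ hE₂
  refine toZMod_eq_zero_iff.1 (mod3 (toZMod m) (toZMod τ) (toZMod t₁) (toZMod t₃) (toZMod α)
    (hm.map _).ne_zero (by linear_combination -hE₁ + toZMod α ^ 2 * h30) ?_)
  linear_combination hE₂ + (toZMod m * toZMod ε ^ 2 + (toZMod τ + toZMod a * toZMod t₁) *
    toZMod b * toZMod t₁) * h30 + toZMod t₁ * toZMod τ * ha'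

theorem isQuadNorm_mul_of_three_dvd (hm : IsUnit m) (ha : (3 : ℤ_[3]) ∣ a + m)
    {t₀ t₁ t₂ t₃ t₄ : ℤ_[3]} (h₁ : t₂ ^ 2 - 3 * m * t₃ ^ 2 - t₀ * t₁ = 0)
    (h₂ : t₂ ^ 2 - 3 * m * t₄ ^ 2 - (t₀ + 3 * a * t₁) * (t₀ + 9 * b * t₁) = 0)
    (hprim : ¬((3 : ℤ_[3]) ∣ t₀ ∧ 3 ∣ t₁ ∧ 3 ∣ t₂ ∧ 3 ∣ t₃ ∧ 3 ∣ t₄))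
    (h₀ : (3 : ℤ_[3]) ∣ t₀) : IsQuadNorm (3 * m) (t₀ * (t₀ + 3 * a * t₁)) := by
  have h3 : (3 : ℤ_[3]) ≠ 0 := by norm_num
  have hprime : Prime (3 : ℤ_[3]) := prime_p
  obtain ⟨τ, rfl⟩ := h₀
  obtain ⟨α, rfl⟩ : (3 : ℤ_[3]) ∣ t₂ :=
    hprime.dvd_of_dvd_pow (n := 2) ⟨m * t₃ ^ 2 + τ * t₁, by linear_combination h₁⟩
  obtain ⟨ε, rfl⟩ : (3 : ℤ_[3]) ∣ t₄ := by
    refine hprime.dvd_of_dvd_pow (n := 2) (hm.dvd_mul_left.1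
      ⟨α ^ 2 - (τ + a * t₁) * (τ + 3 * b * t₁), mul_left_cancel₀ h3 ?_⟩)
    linear_combination -h₂
  have E₁ : 3 * α ^ 2 - m * t₃ ^ 2 - τ * t₁ = 0 :=
    mul_left_cancel₀ h3 (by linear_combination h₁)
  have E₂ : α ^ 2 - 3 * m * ε ^ 2 - (τ + a * t₁) * (τ + 3 * b * t₁) = 0 :=
    mul_left_cancel₀ (pow_ne_zero 2 h3) (by linear_combination h₂)
  obtain ⟨γ, rfl⟩ := three_dvd_of_reduced hm ha E₁ E₂
  have ht₁ : ¬(3 : ℤ_[3]) ∣ t₁ := fun h =>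
    hprim ⟨dvd_mul_right _ _, h, dvd_mul_right _ _, dvd_mul_right _ _, dvd_mul_right _ _⟩
  obtain ⟨κ, rfl⟩ : (3 : ℤ_[3]) ∣ τ :=
    (hprime.dvd_or_dvd ⟨α ^ 2 - 3 * m * γ ^ 2, by linear_combination -E₁⟩).resolve_right ht₁
  have hat₁ : IsUnit (a * t₁) :=
    (isUnit_of_dvd_sub hm.neg (by simpa using ha)).mul (not_not.1 (dvd_iff_not_isUnit.not.1 ht₁))
  obtain ⟨z, hz⟩ := isSquare_one_add_mul (p := 3) (by norm_num) (κ * ↑hat₁.unit⁻¹)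
  obtain ⟨s, hs⟩ := exists_eq_neg_mul_sq hm ha
  have hA : IsQuadNorm (3 * m) (3 * a) := ⟨0, s, by rw [hs]; ring⟩
  have h₀₁ : IsQuadNorm (3 * m) (3 * (3 * κ) * t₁) := ⟨3 * α, 3 * γ, by linear_combination -h₁⟩
  have hvA : 3 * (3 * κ) + 3 * a * t₁ = 3 * a * t₁ * z ^ 2 := by
    push_cast at hz
    linear_combination (3 * a * t₁) * hz - 9 * κ * hat₁.mul_val_inv
  convert (h₀₁.mul hA).mul_sq z using 1
  rw [hvA]
  ring

theorem isQuadNorm_mul_of_primitive (hm : IsUnit m) (ha : (3 : ℤ_[3]) ∣ a + m)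
    {t₀ t₁ t₂ t₃ t₄ : ℤ_[3]} (h₁ : t₂ ^ 2 - 3 * m * t₃ ^ 2 - t₀ * t₁ = 0)
    (h₂ : t₂ ^ 2 - 3 * m * t₄ ^ 2 - (t₀ + 3 * a * t₁) * (t₀ + 9 * b * t₁) = 0)
    (hprim : ¬((3 : ℤ_[3]) ∣ t₀ ∧ 3 ∣ t₁ ∧ 3 ∣ t₂ ∧ 3 ∣ t₃ ∧ 3 ∣ t₄)) :
    IsQuadNorm (3 * m) (t₀ * (t₀ + 3 * a * t₁)) := by
  by_cases h₀ : IsUnit t₀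
  · exact .of_isSquare
      (by simpa [mul_assoc] using isSquare_mul_add_mul (p := 3) (by norm_num) h₀ (a * t₁))
  · exact isQuadNorm_mul_of_three_dvd hm ha h₁ h₂ hprim (dvd_iff_not_isUnit.2 h₀)

variable {D A B : ℚ_[3]} {t : Fin 5 → ℚ_[3]}

theorem isQuadNorm_mul_add (hm : IsUnit m) (ha : (3 : ℤ_[3]) ∣ a + m) (hD : D = 3 * m)
    (hA : A = 3 * a) (hB : B = 9 * b) (h₁ : t 2 ^ 2 - D * t 3 ^ 2 - t 0 * t 1 = 0)
    (h₂ : t 2 ^ 2 - D * t 4 ^ 2 - (t 0 + A * t 1) * (t 0 + B * t 1) = 0) :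
    IsQuadNorm D (t 0 * (t 0 + A * t 1)) := by
  rcases eq_or_ne t 0 with rfl | ht
  · simpa using IsQuadNorm.zero
  obtain ⟨c, hc, s, ⟨j, hj⟩, hs⟩ := Padic.exists_primitive_mul t ht
  subst hD hA hB
  have hO : IsQuadNorm (3 * m) (s 0 * (s 0 + 3 * a * s 1)) := by
    refine isQuadNorm_mul_of_primitive hm ha (t₂ := s 2) (t₃ := s 3) (t₄ := s 4) (b := b) ?_ ?_ ?_
    · rw [← coe_eq_zero]; push_cast [hs]; linear_combination c ^ 2 * h₁
    · rw [← coe_eq_zero]; push_cast [hs]; linear_combination c ^ 2 * h₂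
    · rintro ⟨h0, h1, h2, h3, h4⟩
      have : ∀ i, (3 : ℤ_[3]) ∣ s i := by intro i; fin_cases i <;> assumption
      exact dvd_iff_not_isUnit.1 (hj ▸ this j) isUnit_one
  convert (hO.map Coe.ringHom).mul_sq c⁻¹ using 1
  · rfl
  · change _ = (s 0 : ℚ_[3]) * (s 0 + 3 * a * s 1) * _
    push_cast [hs]
    field_simp

theorem isQuadNorm_mul (hm : IsUnit m) (ha : (3 : ℤ_[3]) ∣ a + m) (hD : D = 3 * m)
    (hA : A = 3 * a) (hB : B = 9 * b) (h₁ : t 2 ^ 2 - D * t 3 ^ 2 - t 0 * t 1 = 0)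
    (h₂ : t 2 ^ 2 - D * t 4 ^ 2 - (t 0 + A * t 1) * (t 0 + B * t 1) = 0) {u v : ℚ_[3]}
    (hu : u = t 0 ∨ u = t 1) (hv : v = t 0 + A * t 1 ∨ v = t 0 + B * t 1) (hu₀ : u ≠ 0) :
    IsQuadNorm D (u * v) := by
  obtain ⟨s, hs⟩ := exists_eq_neg_mul_sq hm ha
  have haU : IsUnit a := isUnit_of_dvd_sub hm.neg (by rwa [sub_neg_eq_add])
  have hs₀ : (s : ℚ_[3]) ≠ 0 := by
    rw [Ne, coe_eq_zero]
    rintro rfl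
    simp [hs] at haU
  have hAs : A = -(D * s ^ 2) := by rw [hA, hD, hs]; push_cast; ring
  have hDsq : ¬IsSquare D := by
    rw [hD]; simpa using not_isSquare_coe (not_isSquare_three_mul hm)
  have hneg : ¬IsSquare (-1 : ℚ_[3]) := by simpa using not_isSquare_coe not_isSquare_neg_one
  have hAnorm : IsQuadNorm D A := ⟨0, s, by rw [hAs]; ring⟩
  exact isQuadNorm_mul_of_isQuadNorm_mul_add hAnorm
    (eq_zero_of_add_mul_eq_zero hDsq hneg hs₀ hAs h₁ h₂) (isQuadNorm_mul_add hm ha hD hA hB h₁ h₂)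
    h₁ h₂ hu hv hu₀

end ThreeAdic

theorem exists_three_mul_of_squarefree {D A B : ℤ} (hsf : Squarefree D) (h3D : 3 ∣ D)
    (hA : A ≡ -D [ZMOD 9]) (hB : B ≡ 0 [ZMOD 9]) :
    ∃ m a b : ℤ, ¬3 ∣ m ∧ 3 ∣ a + m ∧ D = 3 * m ∧ A = 3 * a ∧ B = 9 * b := by
  obtain ⟨m, rfl⟩ := h3D
  obtain ⟨k, hk⟩ := hA.dvd
  obtain ⟨b, rfl⟩ := Int.modEq_zero_iff_dvd.1 hB
  refine ⟨m, -m - 3 * k, b, fun ⟨l, hl⟩ => ?_, ⟨-k, by ring⟩, rfl, by omega, rfl⟩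
  have := hsf 3 ⟨l, by rw [hl]; ring⟩
  rw [Int.isUnit_iff] at this
  omega

theorem stmt_19_general (D : ℤ) (hsf : Squarefree D) (h3D : (3 : ℤ) ∣ D)
    (A B : ℤ) (hA : A ≡ -D [ZMOD 9]) (hB : B ≡ 0 [ZMOD 9]) :
    (∃ t : Fin 5 → ℚ_[3], t ≠ 0 ∧
        (t 2) ^ 2 - (D : ℚ_[3]) * (t 3) ^ 2 - t 0 * t 1 = 0 ∧
        (t 2) ^ 2 - (D : ℚ_[3]) * (t 4) ^ 2 -
          (t 0 + (A : ℚ_[3]) * t 1) * (t 0 + (B : ℚ_[3]) * t 1) = 0) ∧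
    (∀ t : Fin 5 → ℚ_[3], t ≠ 0 →
        (t 2) ^ 2 - (D : ℚ_[3]) * (t 3) ^ 2 - t 0 * t 1 = 0 →
        (t 2) ^ 2 - (D : ℚ_[3]) * (t 4) ^ 2 -
          (t 0 + (A : ℚ_[3]) * t 1) * (t 0 + (B : ℚ_[3]) * t 1) = 0 →
        ∀ u v : ℚ_[3],
          (u = t 0 ∨ u = t 1) →
          (v = t 0 + (A : ℚ_[3]) * t 1 ∨ v = t 0 + (B : ℚ_[3]) * t 1) →
          u * v ≠ 0 →
          ∃ x y : ℚ_[3], u * v = x ^ 2 - (D : ℚ_[3]) * y ^ 2) := by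
  obtain ⟨m, a, b, hm, ha, rfl, rfl, rfl⟩ := exists_three_mul_of_squarefree hsf h3D hA hB
  have hmO : IsUnit (m : ℤ_[3]) := by
    by_contra h
    exact hm (by exact_mod_cast norm_intCast_lt_one_iff.1 (not_isUnit_iff.1 h))
  have haO : (3 : ℤ_[3]) ∣ a + m := by exact_mod_cast map_dvd (Int.castRingHom ℤ_[3]) ha
  have hDK : ((3 * m : ℤ) : ℚ_[3]) = 3 * ((m : ℤ_[3]) : ℚ_[3]) := by push_cast; rfl
  have hAK : ((3 * a : ℤ) : ℚ_[3]) = 3 * ((a : ℤ_[3]) : ℚ_[3]) := by push_cast; rfl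
  have hBK : ((9 * b : ℤ) : ℚ_[3]) = 9 * ((b : ℤ_[3]) : ℚ_[3]) := by push_cast; rfl
  refine ⟨?_, fun t _ h₁ h₂ u v hu hv huv =>
    ThreeAdic.isQuadNorm_mul hmO haO hDK hAK hBK h₁ h₂ hu hv (left_ne_zero_of_mul huv)⟩
  rw [hAK, hBK]
  exact_mod_cast Padic.exists_point (p := 3) (by norm_num) _ (a := 3 * a) (b := 9 * b)
    (dvd_mul_right 3 _) ⟨3 * b, by ring⟩

theorem stmt_19 (D : ℤ) (hD : 0 < D) (hsf : Squarefree D) (h3D : (3 : ℤ) ∣ D)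
    (A B : ℤ) (hA : A ≡ -D [ZMOD 9]) (hB : B ≡ 0 [ZMOD 9]) :
    (∃ t : Fin 5 → ℚ_[3], t ≠ 0 ∧
        (t 2) ^ 2 - (D : ℚ_[3]) * (t 3) ^ 2 - t 0 * t 1 = 0 ∧
        (t 2) ^ 2 - (D : ℚ_[3]) * (t 4) ^ 2 -
          (t 0 + (A : ℚ_[3]) * t 1) * (t 0 + (B : ℚ_[3]) * t 1) = 0) ∧
    (∀ t : Fin 5 → ℚ_[3], t ≠ 0 →
        (t 2) ^ 2 - (D : ℚ_[3]) * (t 3) ^ 2 - t 0 * t 1 = 0 →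
        (t 2) ^ 2 - (D : ℚ_[3]) * (t 4) ^ 2 -
          (t 0 + (A : ℚ_[3]) * t 1) * (t 0 + (B : ℚ_[3]) * t 1) = 0 →
        ∀ u v : ℚ_[3],
          (u = t 0 ∨ u = t 1) →
          (v = t 0 + (A : ℚ_[3]) * t 1 ∨ v = t 0 + (B : ℚ_[3]) * t 1) →
          u * v ≠ 0 →
          ∃ x y : ℚ_[3], u * v = x ^ 2 - (D : ℚ_[3]) * y ^ 2) :=
  stmt_19_general D hsf h3D A B hA hB
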